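/- Let (B0, B1, B2) have the multinomial distribution with parameters t and (p0, p1, p2), where p0, p1, p2 > 0 and p := p0 + p1 + p2 < 1; set M1 = B1 + B0, M2 = B2 + B0. Then for (r, s) = (1, 2) or (2, 1) and every integer i with 0 ≤ i ≤ t and P(M_r = i) > 0, the conditional expectation is linear in i: E[M_s | M_r = i] = t·p_s/(1 − p0 − p_r) + i·(p0/(p0 + p_r) − p_s/(1 − p0 − p_r)). -/

import Mathlib

/-!
On the event `{B1 + B0 = i}` the multinomial weight of `(B0, i - B0, B2)` factors as
`C(t, i) (p0 + p1) ^ i (1 - p0 - p1) ^ (t - i)` times the `Binomial(i, p0 / (p0 + p1))` weight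
of `B0` times the `Binomial(t - i, p2 / (1 - p0 - p1))` weight of `B2`. So, given `M1 = i`,
`B0` and `B2` are independent binomials and
`E[B2 + B0 | M1 = i] = i p0 / (p0 + p1) + (t - i) p2 / (1 - p0 - p1)`, which is linear in `i`.
Exchanging `B1` and `B2` gives the other case.
-/

open MeasureTheory ProbabilityTheory Finset

/-- `(B0, B1, B2)` has the multinomial distribution with parameters `t` and `(p0, p1, p2)`. -/
def IsMultinomial {Ω : Type*} [MeasureSpace Ω] (t : ℕ) (p0 p1 p2 : ℝ)
    (B0 B1 B2 : Ω → ℕ) : Prop :=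
  Measurable B0 ∧ Measurable B1 ∧ Measurable B2 ∧
  ∀ b0 b1 b2 : ℕ,
    (ℙ {ω | B0 ω = b0 ∧ B1 ω = b1 ∧ B2 ω = b2}).toReal =
      if b0 + b1 + b2 ≤ t then
        (Nat.factorial t : ℝ) /
          ((Nat.factorial b0 : ℝ) * (Nat.factorial b1 : ℝ) * (Nat.factorial b2 : ℝ) *
            (Nat.factorial (t - (b0 + b1 + b2)) : ℝ)) *
          (p0 ^ b0 * p1 ^ b1 * p2 ^ b2 * (1 - (p0 + p1 + p2)) ^ (t - (b0 + b1 + b2)))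
      else 0

theorem sum_range_choose_mul_pow_mul_pow (x y : ℝ) (n : ℕ) :
    ∑ k ∈ range (n + 1), (n.choose k : ℝ) * x ^ k * y ^ (n - k) = (x + y) ^ n := by
  rw [add_pow]
  exact sum_congr rfl fun k _ => by ring

theorem sum_range_choose_mul_pow_mul_pow_mul (x y : ℝ) (n : ℕ) :
    ∑ k ∈ range (n + 1), (n.choose k : ℝ) * x ^ k * y ^ (n - k) * k =
      n * x * (x + y) ^ (n - 1) := by
  cases n with
  | zero => simp
  | succ m =>
    have hterm : ∀ j ∈ range (m + 1),
        ((m + 1).choose (j + 1) : ℝ) * x ^ (j + 1) * y ^ (m + 1 - (j + 1)) * ((j + 1 : ℕ) : ℝ)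
          = (m + 1) * x * ((m.choose j : ℝ) * x ^ j * y ^ (m - j)) := fun j _ => by
      have hchoose : ((m + 1) * m.choose j : ℝ) = (m + 1).choose (j + 1) * (j + 1) := by
        exact_mod_cast Nat.add_one_mul_choose_eq m j
      rw [Nat.add_sub_add_right]
      push_cast
      linear_combination (-(x ^ j * x * y ^ (m - j))) * hchoose
    rw [sum_range_succ', sum_congr rfl hterm, ← mul_sum, sum_range_choose_mul_pow_mul_pow]
    simp

theorem sum_range_choose_mul_pow_mul_pow_mul_of_add_ne_zero {x y : ℝ} (hxy : x + y ≠ 0) (n : ℕ) :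
    ∑ k ∈ range (n + 1), (n.choose k : ℝ) * x ^ k * y ^ (n - k) * k =
      n * (x / (x + y)) * (x + y) ^ n := by
  rw [sum_range_choose_mul_pow_mul_pow_mul]
  cases n with
  | zero => simp
  | succ m =>
    rw [Nat.add_sub_cancel, pow_succ]
    field_simp

theorem sum_product_mul_mul_add {ι κ : Type*} (s : Finset ι) (s' : Finset κ) (u f : ι → ℝ)
    (v g : κ → ℝ) :
    ∑ p ∈ s ×ˢ s', u p.1 * v p.2 * (f p.1 + g p.2) =
      (∑ a ∈ s, u a * f a) * ∑ b ∈ s', v b + (∑ a ∈ s, u a) * ∑ b ∈ s', v b * g b := by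
  simp only [sum_product, sum_mul_sum, ← sum_add_distrib]
  exact sum_congr rfl fun a _ => sum_congr rfl fun b _ => by ring

theorem factorial_div_eq_choose_mul_choose_mul_choose {t i b0 b2 : ℕ} (hi : i ≤ t)
    (hb0 : b0 ≤ i) (hb2 : b2 ≤ t - i) :
    (t.factorial : ℝ) / (b0.factorial * (i - b0).factorial * b2.factorial *
        (t - i - b2).factorial) =
      t.choose i * i.choose b0 * (t - i).choose b2 := by
  rw [div_eq_iff (by positivity)]
  have h := Nat.choose_mul_factorial_mul_factorial hi
  rw [← Nat.choose_mul_factorial_mul_factorial hb0,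
    ← Nat.choose_mul_factorial_mul_factorial hb2] at h
  rw [← h]
  push_cast
  ring

theorem integral_eq_sum_of_measure_singleton_eq_zero {α : Type*} [MeasurableSpace α]
    [Countable α] [MeasurableSingletonClass α] {ν : Measure α} [IsFiniteMeasure ν]
    (F : Finset α) (hF : ∀ x ∉ F, ν {x} = 0) (g : α → ℝ) :
    ∫ x, g x ∂ν = ∑ x ∈ F, ν.real {x} * g x := by
  have hae : ∀ᵐ x ∂ν, x ∈ (F : Set α) := by
    rw [ae_iff, ← Set.biUnion_of_singleton {x | x ∉ (F : Set α)}]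
    exact (measure_biUnion_null_iff (Set.to_countable _)).2 hF
  conv_lhs => rw [← Measure.restrict_eq_self_of_ae_mem hae]
  exact setIntegral_finset F IntegrableOn.finset

theorem integral_comp_cond_eq_sum_div {Ω α : Type*} [MeasurableSpace Ω] [MeasurableSpace α]
    [Countable α] [MeasurableSingletonClass α] {μ : Measure Ω} [IsFiniteMeasure μ]
    {Z : Ω → α} (hZ : Measurable Z) {S : Set Ω}
    (F : Finset α) (hF : ∀ x ∉ F, μ (S ∩ Z ⁻¹' {x}) = 0) (g : α → ℝ) :
    ∫ ω, g (Z ω) ∂μ[|S] =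
      (∑ x ∈ F, μ.real (S ∩ Z ⁻¹' {x}) * g x) / ∑ x ∈ F, μ.real (S ∩ Z ⁻¹' {x}) := by
  set ν := (μ.restrict S).map Z
  have hν : ∀ x, ν {x} = μ (S ∩ Z ⁻¹' {x}) := fun x => by
    rw [Measure.map_apply hZ (measurableSet_singleton x), Measure.restrict_apply
      (hZ (measurableSet_singleton x)), Set.inter_comm]
  have hsum (f : α → ℝ) : ∫ x, f x ∂ν = ∑ x ∈ F, μ.real (S ∩ Z ⁻¹' {x}) * f x := by
    rw [integral_eq_sum_of_measure_singleton_eq_zero F (fun x hx => (hν x).trans (hF x hx))]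
    simp only [measureReal_def, hν]
  have hmass : μ.real S = ∑ x ∈ F, μ.real (S ∩ Z ⁻¹' {x}) := by
    simpa only [integral_const, smul_eq_mul, mul_one, measureReal_def, ν, Measure.map_apply hZ
      MeasurableSet.univ, Set.preimage_univ, Measure.restrict_apply_univ] using hsum fun _ => 1
  rw [ProbabilityTheory.cond, integral_smul_measure, ← integral_map hZ.aemeasurable
    (measurable_of_countable g).aestronglyMeasurable, hsum, ENNReal.toReal_inv, ← measureReal_def,
    hmass, smul_eq_mul, inv_mul_eq_div]

namespace IsMultinomial

variable {Ω : Type*} [MeasureSpace Ω] {t : ℕ} {p0 p1 p2 : ℝ} {B0 B1 B2 : Ω → ℕ}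

theorem swap (h : IsMultinomial t p0 p1 p2 B0 B1 B2) : IsMultinomial t p0 p2 p1 B0 B2 B1 := by
  obtain ⟨h0, h1, h2, hP⟩ := h
  refine ⟨h0, h2, h1, fun b0 b2 b1 => ?_⟩
  have hset : {ω | B0 ω = b0 ∧ B2 ω = b2 ∧ B1 ω = b1} =
      {ω | B0 ω = b0 ∧ B1 ω = b1 ∧ B2 ω = b2} := by
    ext ω
    simp only [Set.mem_ofPred_eq]
    tauto
  rw [hset, hP b0 b1 b2, add_right_comm b0 b2 b1]
  split_ifs <;> ring

theorem measure_eq_zero_of_lt [IsFiniteMeasure (ℙ : Measure Ω)]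
    (h : IsMultinomial t p0 p1 p2 B0 B1 B2) {b0 b1 b2 : ℕ} (hb : t < b0 + b1 + b2) :
    ℙ {ω | B0 ω = b0 ∧ B1 ω = b1 ∧ B2 ω = b2} = 0 := by
  have hP := h.2.2.2 b0 b1 b2
  rwa [if_neg hb.not_ge, ENNReal.toReal_eq_zero_iff, or_iff_left (measure_ne_top _ _)] at hP

theorem measureReal_eq_choose_mul (h : IsMultinomial t p0 p1 p2 B0 B1 B2) {i b0 b2 : ℕ}
    (hi : i ≤ t) (hb0 : b0 ≤ i) (hb2 : b2 ≤ t - i) :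
    (ℙ : Measure Ω).real {ω | B0 ω = b0 ∧ B1 ω = i - b0 ∧ B2 ω = b2} =
      t.choose i * (i.choose b0 * p0 ^ b0 * p1 ^ (i - b0)) *
        ((t - i).choose b2 * p2 ^ b2 * (1 - (p0 + p1 + p2)) ^ (t - i - b2)) := by
  have hP := h.2.2.2 b0 (i - b0) b2
  rw [show b0 + (i - b0) + b2 = i + b2 by omega, if_pos (by omega),
    show t - (i + b2) = t - i - b2 by omega,
    factorial_div_eq_choose_mul_choose_mul_choose hi hb0 hb2] at hP
  rw [measureReal_def, hP]
  ring

theorem integral_cond_add_eq [IsFiniteMeasure (ℙ : Measure Ω)]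
    (h : IsMultinomial t p0 p1 p2 B0 B1 B2) (hq : p0 + p1 ≠ 0) (hs : 1 - p0 - p1 ≠ 0)
    {i : ℕ} (hi : i ≤ t) :
    ∫ ω, ((B2 ω + B0 ω : ℕ) : ℝ) ∂ℙ[|{ω | B1 ω + B0 ω = i}] =
      i * (p0 / (p0 + p1)) + (t - i : ℕ) * (p2 / (1 - p0 - p1)) := by
  set S := {ω | B1 ω + B0 ω = i}
  set Z : Ω → ℕ × ℕ := fun ω => (B0 ω, B2 ω)
  set F := range (i + 1) ×ˢ range (t - i + 1)
  have hZ : Measurable Z := h.1.prodMk h.2.2.1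
  have hslice {b0 : ℕ} (b2 : ℕ) (hb0 : b0 ≤ i) :
      S ∩ Z ⁻¹' {(b0, b2)} = {ω | B0 ω = b0 ∧ B1 ω = i - b0 ∧ B2 ω = b2} := by
    ext ω
    simp only [S, Z, Set.mem_inter_iff, Set.mem_preimage, Set.mem_singleton_iff, Prod.ext_iff,
      Set.mem_ofPred_eq]
    omega
  have hnull : ∀ x ∉ F, ℙ (S ∩ Z ⁻¹' {x}) = 0 := by
    rintro ⟨b0, b2⟩ hx
    simp only [F, mem_product, mem_range, not_and_or, not_lt] at hx
    by_cases hb0 : b0 ≤ i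
    · rw [hslice b2 hb0]
      exact h.measure_eq_zero_of_lt (by omega)
    · convert measure_empty (μ := (ℙ : Measure Ω))
      ext ω
      simp only [S, Z, Set.mem_inter_iff, Set.mem_preimage, Set.mem_singleton_iff, Prod.ext_iff,
        Set.mem_ofPred_eq, Set.mem_empty_iff_false, iff_false]
      omega
  set u : ℕ → ℝ := fun b0 => i.choose b0 * p0 ^ b0 * p1 ^ (i - b0)
  set v : ℕ → ℝ := fun b2 => (t - i).choose b2 * p2 ^ b2 * (1 - (p0 + p1 + p2)) ^ (t - i - b2)
  have hweight : ∀ x ∈ F, (ℙ : Measure Ω).real (S ∩ Z ⁻¹' {x}) = t.choose i * (u x.1 * v x.2) := by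
    rintro ⟨b0, b2⟩ hx
    simp only [F, mem_product, mem_range] at hx
    rw [hslice b2 (by omega), h.measureReal_eq_choose_mul hi (by omega) (by omega)]
    ring
  have hsum_u : ∑ b0 ∈ range (i + 1), u b0 = (p0 + p1) ^ i :=
    sum_range_choose_mul_pow_mul_pow p0 p1 i
  have hcompl : p2 + (1 - (p0 + p1 + p2)) = 1 - p0 - p1 := by ring
  have hsum_v : ∑ b2 ∈ range (t - i + 1), v b2 = (1 - p0 - p1) ^ (t - i) := by
    rw [sum_range_choose_mul_pow_mul_pow, hcompl]
  have hmean_u : ∑ b0 ∈ range (i + 1), u b0 * b0 = i * (p0 / (p0 + p1)) * (p0 + p1) ^ i :=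
    sum_range_choose_mul_pow_mul_pow_mul_of_add_ne_zero hq i
  have hmean_v : ∑ b2 ∈ range (t - i + 1), v b2 * b2 =
      (t - i : ℕ) * (p2 / (1 - p0 - p1)) * (1 - p0 - p1) ^ (t - i) := by
    rw [sum_range_choose_mul_pow_mul_pow_mul_of_add_ne_zero (hcompl ▸ hs), hcompl]
  have hC : (t.choose i : ℝ) ≠ 0 := by exact_mod_cast (Nat.choose_pos hi).ne'
  have hnum : ∑ x ∈ F, (ℙ : Measure Ω).real (S ∩ Z ⁻¹' {x}) * ((x.2 + x.1 : ℕ) : ℝ) =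
      t.choose i * ((∑ b0 ∈ range (i + 1), u b0 * b0) * ∑ b2 ∈ range (t - i + 1), v b2 +
        (∑ b0 ∈ range (i + 1), u b0) * ∑ b2 ∈ range (t - i + 1), v b2 * b2) := by
    rw [← sum_product_mul_mul_add, mul_sum]
    refine sum_congr rfl fun x hx => ?_
    rw [hweight x hx]
    push_cast
    ring
  have hden : ∑ x ∈ F, (ℙ : Measure Ω).real (S ∩ Z ⁻¹' {x}) =
      t.choose i * ((∑ b0 ∈ range (i + 1), u b0) * ∑ b2 ∈ range (t - i + 1), v b2) := by
    rw [sum_mul_sum, ← sum_product', mul_sum]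
    exact sum_congr rfl hweight
  rw [integral_comp_cond_eq_sum_div hZ F hnull fun x => ((x.2 + x.1 : ℕ) : ℝ), hnum, hden,
    hsum_u, hsum_v, hmean_u, hmean_v]
  field_simp

end IsMultinomial

theorem conditional_expectation_linear_of_bivariate_binomial_counting
    {Ω : Type*} [MeasureSpace Ω] [IsProbabilityMeasure (ℙ : Measure Ω)]
    (t : ℕ) (p0 p1 p2 : ℝ) (hp0 : 0 < p0) (hp1 : 0 < p1) (hp2 : 0 < p2)
    (hp : p0 + p1 + p2 < 1)
    (B0 B1 B2 : Ω → ℕ)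
    (hmult : IsMultinomial t p0 p1 p2 B0 B1 B2) :
    ∀ i : ℕ, i ≤ t →
      ((ℙ {ω | B1 ω + B0 ω = i} ≠ 0 →
        (∫ ω, ((B2 ω + B0 ω : ℕ) : ℝ) ∂(ℙ[|{ω | B1 ω + B0 ω = i}])) =
          t * p2 / (1 - p0 - p1) + i * (p0 / (p0 + p1) - p2 / (1 - p0 - p1))) ∧
       (ℙ {ω | B2 ω + B0 ω = i} ≠ 0 →
        (∫ ω, ((B1 ω + B0 ω : ℕ) : ℝ) ∂(ℙ[|{ω | B2 ω + B0 ω = i}])) =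
          t * p1 / (1 - p0 - p2) + i * (p0 / (p0 + p2) - p1 / (1 - p0 - p2)))) := by
  intro i hi
  refine ⟨fun _ => ?_, fun _ => ?_⟩
  · rw [hmult.integral_cond_add_eq (by positivity) (by linarith : 0 < 1 - p0 - p1).ne' hi,
      Nat.cast_sub hi]
    ring
  · rw [hmult.swap.integral_cond_add_eq (by positivity) (by linarith : 0 < 1 - p0 - p2).ne' hi,
      Nat.cast_sub hi]
    ring
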